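/- arXiv:2509.03309 — 2 statements merged into one kernel-verified Lean document; each statement's English description precedes it below -/
import Mathlib

section
/- Let n ≥ 2 and let p₁ ≤ p₂ ≤ ⋯ ≤ pₙ be nonnegative reals with Σ_{j=1}^{n} p_j = 1. Define S(P) = Σ_{j=1}^{n} ((2j − n − 1)/(n − 1)) p_j. Then 0 ≤ S(P) ≤ 1; moreover S(P) = 0 when p_j = 1/n for all j, and S(P) = 1 when p_n = 1 and p_j = 0 for all j < n. -/
open Finset

lemma coeff_sum_zero (n : ℕ) :
    ∑ j ∈ Finset.Icc 1 n, (2 * (j : ℝ) - (n : ℝ) - 1) = 0 := by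
  induction n with
  | zero => simp
  | succ m ih =>
    rw [Finset.sum_Icc_succ_top (by omega)]
    have h : ∑ j ∈ Finset.Icc 1 m, (2 * (j : ℝ) - ((m+1 : ℕ) : ℝ) - 1)
        = ∑ j ∈ Finset.Icc 1 m, (2 * (j : ℝ) - (m : ℝ) - 1)
          + (m : ℝ) * ((m : ℝ) - ((m+1 : ℕ) : ℝ)) := by
      rw [Finset.sum_congr rfl (fun j _ => by push_cast; ring :
        ∀ j ∈ Finset.Icc 1 m, (2 * (j : ℝ) - ((m+1 : ℕ) : ℝ) - 1)
          = (2 * (j : ℝ) - (m : ℝ) - 1) + ((m : ℝ) - ((m+1 : ℕ) : ℝ))),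
        Finset.sum_add_distrib, Finset.sum_const, Nat.card_Icc]
      simp [nsmul_eq_mul]
    rw [h, ih]
    push_cast
    ring

/-- For `n ≥ 2` and a sorted probability vector `p₁ ≤ ⋯ ≤ pₙ` of nonnegative reals summing
to 1, the discrete sharpness `S(P) = Σ_{j=1}^{n} ((2j − n − 1)/(n − 1)) p_j` satisfies
`0 ≤ S(P) ≤ 1`; moreover `S(P) = 0` when `p_j = 1/n` for all `j`, and `S(P) = 1` when
`p_n = 1` and `p_j = 0` for all `j < n`. -/
theorem discrete_sharpness_normalization (n : ℕ) (hn : 2 ≤ n) (p : ℕ → ℝ)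
    (hnonneg : ∀ j ∈ Finset.Icc 1 n, 0 ≤ p j)
    (hmono : ∀ i j, 1 ≤ i → i ≤ j → j ≤ n → p i ≤ p j)
    (hsum : ∑ j ∈ Finset.Icc 1 n, p j = 1) :
    (0 ≤ ∑ j ∈ Finset.Icc 1 n, ((2 * (j : ℝ) - (n : ℝ) - 1) / ((n : ℝ) - 1)) * p j) ∧
    (∑ j ∈ Finset.Icc 1 n, ((2 * (j : ℝ) - (n : ℝ) - 1) / ((n : ℝ) - 1)) * p j ≤ 1) ∧
    ((∀ j ∈ Finset.Icc 1 n, p j = 1 / (n : ℝ)) →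
      ∑ j ∈ Finset.Icc 1 n, ((2 * (j : ℝ) - (n : ℝ) - 1) / ((n : ℝ) - 1)) * p j = 0) ∧
    ((p n = 1 ∧ ∀ j, 1 ≤ j → j < n → p j = 0) →
      ∑ j ∈ Finset.Icc 1 n, ((2 * (j : ℝ) - (n : ℝ) - 1) / ((n : ℝ) - 1)) * p j = 1) := by
  have hn2 : (2 : ℝ) ≤ (n : ℝ) := by exact_mod_cast hn
  have hpos : (0 : ℝ) < (n : ℝ) - 1 := by linarith
  have hne : (n : ℝ) - 1 ≠ 0 := ne_of_gt hpos
  refine ⟨?_, ?_, ?_, ?_⟩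
  · -- lower bound via Chebyshev
    have hmv : MonovaryOn (fun j : ℕ => 2 * (j : ℝ) - (n : ℝ) - 1) p
        (Finset.Icc 1 n : Finset ℕ) := by
      intro i hi j hj hij
      simp only [Finset.coe_Icc, Set.mem_Icc] at hi hj
      have hij' : i ≤ j := by
        by_contra h
        exact absurd (hmono j i hj.1 (by omega) hi.2) (not_le.mpr hij)
      have : (i : ℝ) ≤ (j : ℝ) := by exact_mod_cast hij'
      simp only []
      linarith
    have hcheb := hmv.sum_mul_sum_le_card_mul_sum
    rw [coeff_sum_zero, zero_mul] at hcheb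
    have hc : (0 : ℝ) < (#(Finset.Icc 1 n) : ℝ) := by
      rw [Nat.card_Icc]
      have : 0 < n + 1 - 1 := by omega
      exact_mod_cast this
    have hsum0 : 0 ≤ ∑ j ∈ Finset.Icc 1 n, (2 * (j : ℝ) - (n : ℝ) - 1) * p j := by
      nlinarith
    have heq : ∑ j ∈ Finset.Icc 1 n, ((2 * (j : ℝ) - (n : ℝ) - 1) / ((n : ℝ) - 1)) * p j
        = (∑ j ∈ Finset.Icc 1 n, (2 * (j : ℝ) - (n : ℝ) - 1) * p j) / ((n : ℝ) - 1) := by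
      rw [Finset.sum_div]
      exact Finset.sum_congr rfl fun j _ => by ring
    rw [heq]
    exact div_nonneg hsum0 hpos.le
  · -- upper bound
    calc ∑ j ∈ Finset.Icc 1 n, ((2 * (j : ℝ) - (n : ℝ) - 1) / ((n : ℝ) - 1)) * p j
        ≤ ∑ j ∈ Finset.Icc 1 n, p j := by
          refine Finset.sum_le_sum fun j hj => ?_
          have hjn : (j : ℝ) ≤ (n : ℝ) := by
            exact_mod_cast (Finset.mem_Icc.mp hj).2
          have hcoef : (2 * (j : ℝ) - (n : ℝ) - 1) / ((n : ℝ) - 1) ≤ 1 := by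
            rw [div_le_one hpos]; linarith
          calc ((2 * (j : ℝ) - (n : ℝ) - 1) / ((n : ℝ) - 1)) * p j
              ≤ 1 * p j := mul_le_mul_of_nonneg_right hcoef (hnonneg j hj)
            _ = p j := one_mul _
      _ = 1 := hsum
  · -- uniform gives 0
    intro huni
    have : ∑ j ∈ Finset.Icc 1 n, ((2 * (j : ℝ) - (n : ℝ) - 1) / ((n : ℝ) - 1)) * p j
        = (∑ j ∈ Finset.Icc 1 n, (2 * (j : ℝ) - (n : ℝ) - 1))
          * (1 / (((n : ℝ) - 1) * (n : ℝ))) := by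
      rw [Finset.sum_mul]
      refine Finset.sum_congr rfl fun j hj => ?_
      rw [huni j hj]
      field_simp
    rw [this, coeff_sum_zero, zero_mul]
  · -- point mass gives 1
    rintro ⟨hpn, hzero⟩
    have hnmem : n ∈ Finset.Icc 1 n := Finset.mem_Icc.mpr ⟨by omega, le_rfl⟩
    rw [Finset.sum_eq_single n
      (fun j hj hne' => by
        have hj' := Finset.mem_Icc.mp hj
        rw [hzero j hj'.1 (lt_of_le_of_ne hj'.2 hne'), mul_zero])
      (fun h => absurd hnmem h)]
    rw [hpn, mul_one]
    rw [div_eq_one_iff_eq hne]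
    ring
end

section
/- Let 2 ≤ m < n, let p : {1,…,m} → ℝ be nonnegative with p₁ ≤ ⋯ ≤ p_m and Σ p_j = 1, and define q : {1,…,n} → ℝ by q_j = 0 for 1 ≤ j ≤ n − m and q_j = p_{j−(n−m)} for n − m < j ≤ n. With S_k(r) = Σ_{j=1}^{k} ((2j − k − 1)/(k − 1)) r_j denoting the sharpness of a sorted probability vector over k outcomes, one has S_n(q) = 1 + ((m − 1)/(n − 1)) ( S_m(p) − 1 ). -/
open Finset

/-- Forward domain transformation for the discrete sharpness measure: embedding a sorted
probability vector `p` over `m` outcomes into a domain of size `n > m` by prepending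
`n − m` zeros yields `S_n(q) = 1 + ((m − 1)/(n − 1)) (S_m(p) − 1)`, where
`S_k(r) = Σ_{j=1}^{k} ((2j − k − 1)/(k − 1)) r_j`. -/
theorem discrete_sharpness_forward_transformation (m n : ℕ) (hm : 2 ≤ m) (hmn : m < n)
    (p q : ℕ → ℝ)
    (hp_nonneg : ∀ j ∈ Finset.Icc 1 m, 0 ≤ p j)
    (hp_mono : ∀ i j, 1 ≤ i → i ≤ j → j ≤ m → p i ≤ p j)
    (hp_sum : ∑ j ∈ Finset.Icc 1 m, p j = 1)
    (hq_zero : ∀ j, 1 ≤ j → j ≤ n - m → q j = 0)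
    (hq_shift : ∀ j, n - m < j → j ≤ n → q j = p (j - (n - m))) :
    ∑ j ∈ Finset.Icc 1 n, ((2 * (j : ℝ) - (n : ℝ) - 1) / ((n : ℝ) - 1)) * q j =
      1 + (((m : ℝ) - 1) / ((n : ℝ) - 1)) *
        ((∑ j ∈ Finset.Icc 1 m, ((2 * (j : ℝ) - (m : ℝ) - 1) / ((m : ℝ) - 1)) * p j) - 1) := by
  have hmn' : m ≤ n := hmn.le
  have hcast : ((n - m : ℕ) : ℝ) = (n : ℝ) - (m : ℝ) := by
    push_cast [Nat.cast_sub hmn']; ring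
  have hm1 : (m : ℝ) - 1 ≠ 0 := by
    have : (2 : ℝ) ≤ (m : ℝ) := by exact_mod_cast hm
    linarith
  have hn1 : (n : ℝ) - 1 ≠ 0 := by
    have : (2 : ℝ) < (n : ℝ) := by exact_mod_cast lt_of_le_of_lt hm hmn
    linarith
  -- split the sum
  have hsplit : ∑ j ∈ Finset.Icc 1 n, ((2 * (j : ℝ) - (n : ℝ) - 1) / ((n : ℝ) - 1)) * q j
      = ∑ j ∈ Finset.Ioc (n - m) n, ((2 * (j : ℝ) - (n : ℝ) - 1) / ((n : ℝ) - 1)) * q j := by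
    have h1 : Finset.Icc 1 n = Finset.Ioc 0 n := rfl
    rw [h1, ← Finset.sum_Ioc_consecutive _ (Nat.zero_le (n - m)) (Nat.sub_le n m)]
    have hz : ∑ j ∈ Finset.Ioc 0 (n - m), ((2 * (j : ℝ) - (n : ℝ) - 1) / ((n : ℝ) - 1)) * q j = 0 := by
      apply Finset.sum_eq_zero
      intro j hj
      rw [Finset.mem_Ioc] at hj
      rw [hq_zero j hj.1 hj.2, mul_zero]
    rw [hz, zero_add]
  rw [hsplit]
  -- reindex
  have hre : ∑ j ∈ Finset.Ioc (n - m) n, ((2 * (j : ℝ) - (n : ℝ) - 1) / ((n : ℝ) - 1)) * q j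
      = ∑ j ∈ Finset.Icc 1 m, ((2 * ((j : ℝ) + ((n : ℝ) - (m : ℝ))) - (n : ℝ) - 1) / ((n : ℝ) - 1)) * p j := by
    apply Finset.sum_nbij' (fun j => j - (n - m)) (fun j => j + (n - m))
    · intro j hj
      rw [Finset.mem_Ioc] at hj
      rw [Finset.mem_Icc]
      omega
    · intro j hj
      rw [Finset.mem_Icc] at hj
      rw [Finset.mem_Ioc]
      omega
    · intro j hj; rw [Finset.mem_Ioc] at hj; omega
    · intro j hj; rw [Finset.mem_Icc] at hj; omega
    · intro j hj
      rw [Finset.mem_Ioc] at hj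
      rw [hq_shift j hj.1 hj.2]
      have hc : ((j - (n - m) : ℕ) : ℝ) = (j : ℝ) - ((n : ℝ) - (m : ℝ)) := by
        rw [Nat.cast_sub hj.1.le, hcast]
      rw [hc]
      ring_nf
  rw [hre]
  have hcoef : ∀ j ∈ Finset.Icc 1 m,
      ((2 * ((j : ℝ) + ((n : ℝ) - (m : ℝ))) - (n : ℝ) - 1) / ((n : ℝ) - 1)) * p j
      = (((m : ℝ) - 1) / ((n : ℝ) - 1)) * (((2 * (j : ℝ) - (m : ℝ) - 1) / ((m : ℝ) - 1)) * p j)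
        + (((n : ℝ) - (m : ℝ)) / ((n : ℝ) - 1)) * p j := by
    intro j _
    field_simp
    ring
  rw [Finset.sum_congr rfl hcoef, Finset.sum_add_distrib, ← Finset.mul_sum, ← Finset.mul_sum,
    hp_sum, mul_one]
  field_simp
  ring
end
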